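/- Let A be a commutative ℂ-algebra, R a positive totally ordered aura with tempered growth, and |·| : A → R a power-multiplicative seminorm whose restriction to ℂ (via the algebra map) is multiplicatively equivalent to the usual complex absolute value, in the sense that for all λ, μ, ν ∈ ℂ one has ‖λ‖·‖ν‖ ≤ ‖μ‖ if and only if |λ|·|ν| ≤ |μ| (values taken at the images of λ, μ, ν in A). Assume |·| has trivial kernel (|a| = 0 implies a = 0) and is both upper and lower bounded: for every nonzero a ∈ A there exist nonzero λ, μ ∈ ℂ with |λ| ≤ |a| ≤ |μ|. Then for every a ∈ A there exists λ ∈ ℂ with |a| = |λ| (value at the image of λ in A), and there exists a seminorm g : A → ℝ≥0 such that for all a, b ∈ A, |a| ≤ |b| if and only if g(a) ≤ g(b). -/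

import Mathlib

/-!
Restricted to scalars, the seminorm is a strictly monotone multiplicative map `φ : ℝ≥0 → R`,
`φ t = |t|`. Tempered growth says that `y ^ n ≤ P(n) z ^ n` for all `n` forces `y ≤ z`; as
`φ ((1 + 1/n) ^ n) ≤ φ 3 ≤ 3`, this pins every `|a|` lying between two values of `φ` to
`φ (sup {t | φ t ≤ |a|})`. So `|a| = φ (g a)` for some `g : A → ℝ≥0`, which is submultiplicative
because `φ` is, and subadditive because the binomial theorem gives
`|a + b| ^ n ≤ (n + 1) φ (g a + g b) ^ n`.
-/

open NNReal Polynomial Finset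

theorem IsOrderedRing.of_add_le_add_of_mul_le_mul {R : Type*} [Semiring R] [PartialOrder R]
    (hadd : ∀ x y z t : R, x ≤ z → y ≤ t → x + y ≤ z + t)
    (hmul : ∀ x y z t : R, x ≤ z → y ≤ t → x * y ≤ z * t) (h01 : (0 : R) ≤ 1) :
    IsOrderedRing R where
  add_le_add_left _ _ h _ := hadd _ _ _ _ h le_rfl
  zero_le_one := h01
  mul_le_mul_of_nonneg_left _ _ _ _ h := hmul _ _ _ _ le_rfl h
  mul_le_mul_of_nonneg_right _ _ _ _ h := hmul _ _ _ _ h le_rfl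

theorem nonneg_of_forall_mul_le_mul {R : Type*} [Semifield R] [LinearOrder R]
    (hmul : ∀ x y z t : R, x ≤ z → y ≤ t → x * y ≤ z * t) (hpos : (0 : R) < 1) (x : R) :
    0 ≤ x := by
  by_contra! hx
  have h := hmul _ _ _ _ hx.le (le_refl x⁻¹)
  rw [mul_inv_cancel₀ hx.ne, zero_mul] at h
  exact hpos.not_ge h

theorem NNReal.one_add_inv_pow_le_three (n : ℕ) : (1 + (n : ℝ≥0)⁻¹) ^ n ≤ 3 := by
  rw [← NNReal.coe_le_coe]
  push_cast
  linarith [Real.one_add_inv_pow_le_exp (n := n), Real.exp_one_lt_d9]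

def TemperedGrowth (R : Type*) [Semiring R] [LE R] : Prop :=
  ∀ P : Polynomial ℕ, P ≠ 0 → ∀ x : R, (∀ n : ℕ, x ^ n ≤ ((P.eval n : ℕ) : R)) → x ≤ 1

section Tempered

variable {R : Type*} [Semifield R] [LinearOrder R] [IsOrderedRing R]

theorem TemperedGrowth.le_of_forall_pow_le_mul_pow (hT : TemperedGrowth R)
    (hnn : ∀ x : R, 0 ≤ x) {P : ℕ[X]} (hP : P ≠ 0) {y z : R}
    (h : ∀ n : ℕ, y ^ n ≤ ((P.eval n : ℕ) : R) * z ^ n) : y ≤ z := by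
  rcases eq_or_ne z 0 with rfl | hz
  · simpa using h 1
  have hyz : y * z⁻¹ ≤ 1 := hT P hP _ fun n => by
    calc (y * z⁻¹) ^ n = y ^ n * (z ^ n)⁻¹ := by rw [mul_pow, inv_pow]
      _ ≤ ((P.eval n : ℕ) : R) * z ^ n * (z ^ n)⁻¹ := mul_le_mul_of_nonneg_right (h n) (hnn _)
      _ = P.eval n := by rw [mul_assoc, mul_inv_cancel₀ (pow_ne_zero n hz), mul_one]
  calc y = y * z⁻¹ * z := by rw [mul_assoc, inv_mul_cancel₀ hz, mul_one]
    _ ≤ 1 * z := mul_le_mul_of_nonneg_right hyz (hnn z)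
    _ = z := one_mul z

variable {φ : ℝ≥0 →*₀ R}

theorem TemperedGrowth.le_of_forall_le_mul_one_add_inv (hT : TemperedGrowth R)
    (hnn : ∀ x : R, 0 ≤ x) (hφ : Monotone φ) (h3 : φ 3 ≤ 3) {y z : R}
    (h : ∀ n : ℕ, 0 < n → y ≤ z * φ (1 + (n : ℝ≥0)⁻¹)) : y ≤ z := by
  refine hT.le_of_forall_pow_le_mul_pow hnn (P := C 3) (C_ne_zero.2 three_ne_zero) fun n => ?_
  rw [eval_C, Nat.cast_ofNat]
  rcases n.eq_zero_or_pos with rfl | hn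
  · simpa using Nat.mono_cast (α := R) (show 1 ≤ 3 by norm_num)
  calc y ^ n ≤ (z * φ (1 + (n : ℝ≥0)⁻¹)) ^ n := pow_le_pow_left₀ (hnn _) (h n hn) n
    _ = φ ((1 + (n : ℝ≥0)⁻¹) ^ n) * z ^ n := by rw [mul_pow, map_pow, mul_comm]
    _ ≤ 3 * z ^ n :=
        mul_le_mul_of_nonneg_right ((hφ (one_add_inv_pow_le_three n)).trans h3) (hnn _)

theorem TemperedGrowth.exists_apply_eq_of_le_of_le (hT : TemperedGrowth R)
    (hnn : ∀ x : R, 0 ≤ x) (hφ : StrictMono φ) (h3 : φ 3 ≤ 3) {v : R} {s t : ℝ≥0} (hs : 0 < s)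
    (hsv : φ s ≤ v) (hvt : v ≤ φ t) : ∃ r, φ r = v := by
  set S := {u | φ u ≤ v}
  have hbdd : BddAbove S := ⟨t, fun u hu => hφ.le_iff_le.1 (le_trans hu hvt)⟩
  have hsS : s ∈ S := hsv
  have hr : 0 < sSup S := hs.trans_le (le_csSup hbdd hsS)
  have hgt (n : ℕ) (hn : 0 < n) : 1 < 1 + (n : ℝ≥0)⁻¹ :=
    lt_add_of_pos_right 1 (inv_pos.2 (Nat.cast_pos.2 hn))
  refine ⟨sSup S, le_antisymm ?_ ?_⟩
  · refine hT.le_of_forall_le_mul_one_add_inv hnn hφ.monotone h3 fun n hn => ?_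
    obtain ⟨u, huS, hu⟩ := exists_lt_of_lt_csSup ⟨s, hsS⟩ (div_lt_self hr (hgt n hn))
    calc φ (sSup S) = φ (sSup S / (1 + (n : ℝ≥0)⁻¹)) * φ (1 + (n : ℝ≥0)⁻¹) := by
          rw [← map_mul, div_mul_cancel₀ _ (zero_lt_one.trans (hgt n hn)).ne']
      _ ≤ v * φ (1 + (n : ℝ≥0)⁻¹) :=
          mul_le_mul_of_nonneg_right ((hφ.monotone hu.le).trans huS) (hnn _)
  · refine hT.le_of_forall_le_mul_one_add_inv hnn hφ.monotone h3 fun n hn => ?_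
    have hnotS : sSup S * (1 + (n : ℝ≥0)⁻¹) ∉ S := fun h =>
      (lt_mul_of_one_lt_right hr (hgt n hn)).not_ge (le_csSup hbdd h)
    rw [← map_mul]
    exact (not_le.1 hnotS).le

end Tempered

structure IsPowMulSeminorm {A R : Type*} [Semiring A] [Semiring R] [LE R] (f : A → R) : Prop where
  map_zero : f 0 = 0
  map_one : f 1 = 1
  map_mul_le (a b : A) : f (a * b) ≤ f a * f b
  map_add_le (a b : A) : f (a + b) ≤ f a + f b
  map_pow (a : A) (n : ℕ) : f (a ^ n) = f a ^ n

def MulEquivNormOnScalars {A R : Type*} [Semiring A] [Algebra ℂ A] [Mul R] [LE R]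
    (f : A → R) : Prop :=
  ∀ lam mu nu : ℂ, ‖lam‖ * ‖nu‖ ≤ ‖mu‖ ↔
    f (algebraMap ℂ A lam) * f (algebraMap ℂ A nu) ≤ f (algebraMap ℂ A mu)

namespace IsPowMulSeminorm

section OrderedSemiring

variable {A R : Type*} [Semiring R] [PartialOrder R] [IsOrderedRing R] {f : A → R}

theorem map_natCast_le [Semiring A] (hf : IsPowMulSeminorm f) (n : ℕ) : f n ≤ n := by
  simpa [hf.map_one] using
    le_sum_of_subadditive f hf.map_zero.le hf.map_add_le (range n) fun _ => (1 : A)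

theorem pow_map_add_le [CommSemiring A] (hf : IsPowMulSeminorm f) (hnn : ∀ a, 0 ≤ f a)
    (x y : A) (n : ℕ) :
    f (x + y) ^ n ≤ ∑ k ∈ range (n + 1), f x ^ k * f y ^ (n - k) * f (n.choose k : A) :=
  calc f (x + y) ^ n = f (∑ k ∈ range (n + 1), x ^ k * y ^ (n - k) * n.choose k) := by
        rw [← hf.map_pow, add_pow]
    _ ≤ ∑ k ∈ range (n + 1), f (x ^ k * y ^ (n - k) * n.choose k) :=
        le_sum_of_subadditive f hf.map_zero.le hf.map_add_le _ _
    _ ≤ ∑ k ∈ range (n + 1), f x ^ k * f y ^ (n - k) * f (n.choose k : A) := by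
        refine sum_le_sum fun k _ => (hf.map_mul_le _ _).trans ?_
        rw [← hf.map_pow, ← hf.map_pow]
        exact mul_le_mul_of_nonneg_right (hf.map_mul_le _ _) (hnn _)

end OrderedSemiring

section Complex

variable {A R : Type*} [CommSemiring A] [Algebra ℂ A] [Semifield R] [LinearOrder R] {f : A → R}

theorem norm_le_norm_iff (hf : IsPowMulSeminorm f) (hC : MulEquivNormOnScalars f) (lam mu : ℂ) :
    ‖lam‖ ≤ ‖mu‖ ↔ f (algebraMap ℂ A lam) ≤ f (algebraMap ℂ A mu) := by
  simpa [hf.map_one] using hC lam mu 1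

theorem map_algebraMap_mul (hf : IsPowMulSeminorm f) (hC : MulEquivNormOnScalars f)
    (lam mu : ℂ) :
    f (algebraMap ℂ A (lam * mu)) = f (algebraMap ℂ A lam) * f (algebraMap ℂ A mu) :=
  le_antisymm (map_mul (algebraMap ℂ A) lam mu ▸ hf.map_mul_le _ _)
    ((hC lam (lam * mu) mu).1 (norm_mul lam mu).ge)

def nnrealHom (hf : IsPowMulSeminorm f) (hC : MulEquivNormOnScalars f) : ℝ≥0 →*₀ R where
  toFun t := f (algebraMap ℂ A t)
  map_zero' := by simp [hf.map_zero]
  map_one' := by simp [hf.map_one]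
  map_mul' s t := by simp only [NNReal.coe_mul, Complex.ofReal_mul, hf.map_algebraMap_mul hC]

theorem map_algebraMap_eq_nnrealHom (hf : IsPowMulSeminorm f) (hC : MulEquivNormOnScalars f)
    (lam : ℂ) : f (algebraMap ℂ A lam) = hf.nnrealHom hC ‖lam‖₊ :=
  le_antisymm ((hf.norm_le_norm_iff hC _ _).1 (by simp))
    ((hf.norm_le_norm_iff hC _ _).1 (by simp))

theorem strictMono_nnrealHom (hf : IsPowMulSeminorm f) (hC : MulEquivNormOnScalars f) :
    StrictMono (hf.nnrealHom hC) :=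
  strictMono_of_le_iff_le fun s t => by
    simpa [nnrealHom] using hf.norm_le_norm_iff hC s t

theorem nnrealHom_natCast (hf : IsPowMulSeminorm f) (hC : MulEquivNormOnScalars f) (n : ℕ) :
    hf.nnrealHom hC n = f n := by
  simp [nnrealHom]

variable [IsOrderedRing R]

theorem exists_eq_nnrealHom (hf : IsPowMulSeminorm f) (hC : MulEquivNormOnScalars f)
    (hT : TemperedGrowth R) (hnn : ∀ x : R, 0 ≤ x) {a : A} {lam mu : ℂ} (hlam : lam ≠ 0)
    (hla : f (algebraMap ℂ A lam) ≤ f a) (ham : f a ≤ f (algebraMap ℂ A mu)) :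
    ∃ r, f a = hf.nnrealHom hC r := by
  have h3 : hf.nnrealHom hC 3 ≤ 3 := by
    simpa using (hf.nnrealHom_natCast hC 3).trans_le (hf.map_natCast_le 3)
  rw [hf.map_algebraMap_eq_nnrealHom hC] at hla ham
  obtain ⟨r, hr⟩ := hT.exists_apply_eq_of_le_of_le hnn (hf.strictMono_nnrealHom hC) h3
    (nnnorm_pos.2 hlam) hla ham
  exact ⟨r, hr.symm⟩

theorem map_add_le_nnrealHom_add (hf : IsPowMulSeminorm f) (hC : MulEquivNormOnScalars f)
    (hT : TemperedGrowth R) (hnn : ∀ x : R, 0 ≤ x) {x y : A} {u v : ℝ≥0}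
    (hx : f x = hf.nnrealHom hC u) (hy : f y = hf.nnrealHom hC v) :
    f (x + y) ≤ hf.nnrealHom hC (u + v) := by
  set φ := hf.nnrealHom hC
  refine hT.le_of_forall_pow_le_mul_pow hnn (P := X + C 1) (X_add_C_ne_zero 1) fun n => ?_
  have hterm (k : ℕ) (hk : k ∈ range (n + 1)) :
      f x ^ k * f y ^ (n - k) * f (n.choose k : A) ≤ φ (u + v) ^ n := by
    rw [hx, hy, ← hf.nnrealHom_natCast hC, ← _root_.map_pow, ← _root_.map_pow, ← _root_.map_pow,
      ← _root_.map_mul, ← _root_.map_mul]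
    refine (hf.strictMono_nnrealHom hC).monotone ?_
    rw [add_pow]
    exact single_le_sum (f := fun k => u ^ k * v ^ (n - k) * n.choose k) (fun _ _ => zero_le) hk
  calc f (x + y) ^ n
      ≤ ∑ k ∈ range (n + 1), f x ^ k * f y ^ (n - k) * f (n.choose k : A) :=
        hf.pow_map_add_le (fun _ => hnn _) x y n
    _ ≤ (n + 1) • φ (u + v) ^ n := by simpa using sum_le_card_nsmul _ _ _ hterm
    _ = (((X + C 1 : ℕ[X]).eval n : ℕ) : R) * φ (u + v) ^ n := by simp [nsmul_eq_mul]

end Complex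

end IsPowMulSeminorm

theorem upper_lower_bounded_equiv_real_seminorm_general
    {A : Type*} [CommRing A] [Algebra ℂ A]
    {R : Type*} [Semifield R] [LinearOrder R]
    (hadd : ∀ x y z t : R, x ≤ z → y ≤ t → x + y ≤ z + t)
    (hmul : ∀ x y z t : R, x ≤ z → y ≤ t → x * y ≤ z * t)
    (hpos : (0 : R) < 1)
    (htemp : ∀ P : Polynomial ℕ, P ≠ 0 →
      ∀ x : R, (∀ n : ℕ, x ^ n ≤ ((P.eval n : ℕ) : R)) → x ≤ 1)
    (f : A → R)
    (hf0 : f 0 = 0) (hf1 : f 1 = 1)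
    (hfm : ∀ a b : A, f (a * b) ≤ f a * f b)
    (hfa : ∀ a b : A, f (a + b) ≤ f a + f b)
    (hpm : ∀ (a : A) (n : ℕ), f (a ^ n) = f a ^ n)
    (hC : ∀ lam mu nu : ℂ, ‖lam‖ * ‖nu‖ ≤ ‖mu‖ ↔
      f (algebraMap ℂ A lam) * f (algebraMap ℂ A nu) ≤ f (algebraMap ℂ A mu))
    (hbd : ∀ a : A, a ≠ 0 → ∃ lam mu : ℂ, lam ≠ 0 ∧ mu ≠ 0 ∧
      f (algebraMap ℂ A lam) ≤ f a ∧ f a ≤ f (algebraMap ℂ A mu)) :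
    (∀ a : A, ∃ lam : ℂ, f a = f (algebraMap ℂ A lam)) ∧
      ∃ g : A → NNReal, g 0 = 0 ∧ g 1 = 1 ∧
        (∀ a b : A, g (a * b) ≤ g a * g b) ∧
        (∀ a b : A, g (a + b) ≤ g a + g b) ∧
        ∀ a b : A, f a ≤ f b ↔ g a ≤ g b := by
  have := IsOrderedRing.of_add_le_add_of_mul_le_mul hadd hmul hpos.le
  have hnn := nonneg_of_forall_mul_le_mul hmul hpos
  have hf : IsPowMulSeminorm f := ⟨hf0, hf1, hfm, hfa, hpm⟩
  set φ := hf.nnrealHom hC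
  have hφ : StrictMono φ := hf.strictMono_nnrealHom hC
  have hrange (a : A) : ∃ r, f a = φ r := by
    rcases eq_or_ne a 0 with rfl | ha
    · exact ⟨0, by rw [hf0, map_zero]⟩
    obtain ⟨lam, mu, hlam, -, hla, ham⟩ := hbd a ha
    exact hf.exists_eq_nnrealHom hC htemp hnn hlam hla ham
  choose g hg using hrange
  refine ⟨fun a => ⟨g a, hg a⟩, g, hφ.injective ?_, hφ.injective ?_, fun a b => ?_,
    fun a b => ?_, fun a b => ?_⟩
  · rw [← hg, hf0, map_zero]
  · rw [← hg, hf1, map_one]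
  · rw [← hφ.le_iff_le, map_mul, ← hg, ← hg, ← hg]
    exact hfm a b
  · rw [← hφ.le_iff_le, ← hg]
    exact hf.map_add_le_nnrealHom_add hC htemp hnn (hg a) (hg b)
  · rw [hg a, hg b, hφ.le_iff_le]

/-- A tempered power-multiplicative seminorm on a `ℂ`-algebra whose restriction to `ℂ`
is multiplicatively equivalent to the complex absolute value, with trivial kernel,
and which is both upper and lower bounded, takes only values of the form `|λ|` for
`λ ∈ ℂ` and is equivalent to an `ℝ≥0`-valued seminorm. -/
theorem upper_lower_bounded_equiv_real_seminorm
    {A : Type*} [CommRing A] [Algebra ℂ A]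
    {R : Type*} [Semifield R] [LinearOrder R]
    (hadd : ∀ x y z t : R, x ≤ z → y ≤ t → x + y ≤ z + t)
    (hmul : ∀ x y z t : R, x ≤ z → y ≤ t → x * y ≤ z * t)
    (hpos : (0 : R) < 1)
    (htemp : ∀ P : Polynomial ℕ, P ≠ 0 →
      ∀ x : R, (∀ n : ℕ, x ^ n ≤ ((P.eval n : ℕ) : R)) → x ≤ 1)
    (f : A → R)
    (hf0 : f 0 = 0) (hf1 : f 1 = 1)
    (hfm : ∀ a b : A, f (a * b) ≤ f a * f b)
    (hfa : ∀ a b : A, f (a + b) ≤ f a + f b)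
    (hpm : ∀ (a : A) (n : ℕ), f (a ^ n) = f a ^ n)
    (hC : ∀ lam mu nu : ℂ, ‖lam‖ * ‖nu‖ ≤ ‖mu‖ ↔
      f (algebraMap ℂ A lam) * f (algebraMap ℂ A nu) ≤ f (algebraMap ℂ A mu))
    (hker : ∀ a : A, f a = 0 → a = 0)
    (hbd : ∀ a : A, a ≠ 0 → ∃ lam mu : ℂ, lam ≠ 0 ∧ mu ≠ 0 ∧
      f (algebraMap ℂ A lam) ≤ f a ∧ f a ≤ f (algebraMap ℂ A mu)) :
    (∀ a : A, ∃ lam : ℂ, f a = f (algebraMap ℂ A lam)) ∧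
      ∃ g : A → NNReal, g 0 = 0 ∧ g 1 = 1 ∧
        (∀ a b : A, g (a * b) ≤ g a * g b) ∧
        (∀ a b : A, g (a + b) ≤ g a + g b) ∧
        ∀ a b : A, f a ≤ f b ↔ g a ≤ g b :=
  upper_lower_bounded_equiv_real_seminorm_general hadd hmul hpos htemp f hf0 hf1 hfm hfa hpm hC hbd
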